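/- arXiv:2404.03806 — 4 statements merged into one kernel-verified Lean document; each statement's English description precedes it below -/
import Mathlib

section
/- Let I_x, I₁ ⊆ ℝ be intervals, θ₁ > 0 and θ₂ ∈ ℝ. Set Ω_per := I_x × I₁ × (0,1) ⊆ ℝ³, Q := {(x,z) ∈ ℝ² : x ∈ I_x and θ₁·z ∈ I₁}, and Ω_{per,θ} := {(x, θ₁·z, θ₂·z + s) : (x,z) ∈ Q, s ∈ (0,1)}. Let V : ℝ³ → ℂ be Lebesgue-integrable on Ω_per and let Ṽ : ℝ³ → ℂ be its ℤe₂-periodic extension, defined by Ṽ(x, z₁, z₂) := V(x, z₁, z₂ − ⌊z₂⌋). Then Ṽ is integrable on Ω_{per,θ}, and ∫_{Ω_per} V d(x,z₁,z₂) = ∫_{Ω_{per,θ}} Ṽ d(x,z₁,z₂), with respect to Lebesgue measure on ℝ³. -/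
/-!
The shear `(z₁, z₂) ↦ (z₁, c z₁ + z₂)` with `c = θ₂ / θ₁` preserves Lebesgue measure and carries
`Ω_per` onto `Ω_{per,θ}`. Composed with its inverse, reduction of `z₂` modulo `1` becomes the map
`(z₁, s) ↦ (z₁, fract (c z₁ + s))` on `Ω_per`, which preserves the restricted Lebesgue measure
because, fibrewise, `fract` maps Lebesgue measure on any interval of length one onto `(0, 1)`.
Hence `(x, z₁, z₂) ↦ (x, z₁, fract z₂)` pushes Lebesgue measure on `Ω_{per,θ}` forward to Lebesgue
measure on `Ω_per`, and `Ṽ` is `V` composed with this map.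
-/

open MeasureTheory Set

lemma Int.fract_eq_coe_equivIco (x : ℝ) :
    Int.fract x = (AddCircle.equivIco 1 0 (x : AddCircle (1 : ℝ)) : ℝ) := by
  rw [← AddCircle.coe_fract, AddCircle.equivIco_coe_of_mem]
  rw [zero_add]
  exact ⟨Int.fract_nonneg x, Int.fract_lt_one x⟩

theorem map_fract_volume_restrict_Ioo (a : ℝ) :
    (volume.restrict (Ioo a (a + 1))).map Int.fract = volume.restrict (Ioo (0 : ℝ) 1) := by
  -- Both sides factor through the covering map `ℝ → AddCircle 1`, which forgets `a`.
  have through_circle (b : ℝ) : (volume.restrict (Ioo b (b + 1))).map Int.fract =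
      (volume : Measure (AddCircle (1 : ℝ))).map (fun y => (AddCircle.equivIco 1 0 y : ℝ)) := by
    have hg : Measurable fun y : AddCircle (1 : ℝ) => (AddCircle.equivIco 1 0 y : ℝ) :=
      measurable_subtype_coe.comp (AddCircle.measurableEquivIco 1 0).measurable
    rw [Measure.restrict_congr_set Ioo_ae_eq_Ioc, ← (AddCircle.measurePreserving_mk 1 b).map_eq,
      Measure.map_map hg AddCircle.measurable_mk']
    exact congrArg (fun f => Measure.map f _) (funext Int.fract_eq_coe_equivIco)
  have fract_ae_eq_id : Int.fract =ᵐ[volume.restrict (Ioo (0 : ℝ) 1)] id :=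
    (ae_restrict_iff' measurableSet_Ioo).2 <|
      Filter.Eventually.of_forall fun x hx => Int.fract_eq_self.2 ⟨hx.1.le, hx.2⟩
  rw [through_circle, ← through_circle 0, zero_add, Measure.map_congr fract_ae_eq_id,
    Measure.map_id]

theorem measurePreserving_fract_mul_add (μ : Measure ℝ) [SFinite μ] (c : ℝ) :
    MeasurePreserving (fun p : ℝ × ℝ => (p.1, Int.fract (c * p.1 + p.2)))
      (μ.prod (volume.restrict (Ioo 0 1))) (μ.prod (volume.restrict (Ioo 0 1))) := by
  refine (MeasurePreserving.id μ).skew_product (g := fun z t => Int.fract (c * z + t))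
    ((measurable_fst.const_mul c).add measurable_snd).fract (ae_of_all _ fun z => ?_)
  have translate := (measurePreserving_add_left volume (c * z)).restrict_image_emb
    (measurableEmbedding_addLeft (c * z)) (Ioo 0 1)
  rw [image_const_add_Ioo, add_zero] at translate
  calc (volume.restrict (Ioo 0 1)).map (fun t => Int.fract (c * z + t))
      = ((volume.restrict (Ioo 0 1)).map (c * z + ·)).map Int.fract :=
        (Measure.map_map measurable_fract translate.measurable).symm
    _ = volume.restrict (Ioo 0 1) := by rw [translate.map_eq, map_fract_volume_restrict_Ioo]

def shear (c : ℝ) : ℝ × ℝ ≃ᵐ ℝ × ℝ where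
  toFun p := (p.1, c * p.1 + p.2)
  invFun p := (p.1, p.2 - c * p.1)
  left_inv p := by simp
  right_inv p := by simp
  measurable_toFun := show Measurable fun p : ℝ × ℝ => (p.1, c * p.1 + p.2) by fun_prop
  measurable_invFun := show Measurable fun p : ℝ × ℝ => (p.1, p.2 - c * p.1) by fun_prop

theorem measurePreserving_shear (μ : Measure ℝ) [SFinite μ] (c : ℝ) :
    MeasurePreserving (shear c) (μ.prod volume) (μ.prod volume) :=
  (MeasurePreserving.id μ).skew_product (g := fun z t => c * z + t) (by fun_prop)
    (ae_of_all _ fun z => (measurePreserving_add_left volume (c * z)).map_eq)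

theorem measurePreserving_prodMap_id_fract_shear_image (μ : Measure ℝ) [SFinite μ] (I : Set ℝ)
    (c : ℝ) :
    MeasurePreserving (Prod.map id Int.fract)
      ((μ.prod volume).restrict (shear c '' (I ×ˢ Ioo 0 1)))
      ((μ.prod volume).restrict (I ×ˢ Ioo 0 1)) := by
  have unshear : MeasurePreserving (shear c).symm
      ((μ.prod volume).restrict (shear c '' (I ×ˢ Ioo 0 1)))
      ((μ.prod volume).restrict (I ×ˢ Ioo 0 1)) := by
    rw [MeasurableEquiv.image_eq_preimage_symm]
    exact ((measurePreserving_shear μ c).symm _).restrict_preimage_emb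
      (shear c).symm.measurableEmbedding _
  have fract_shear := measurePreserving_fract_mul_add (μ.restrict I) c
  rw [Measure.prod_restrict] at fract_shear
  convert fract_shear.comp unshear using 1
  funext p
  simp [shear, Prod.map]

lemma obliqueDomain_eq_prod_shear_image (Ix I₁ : Set ℝ) {θ₁ : ℝ} (hθ₁ : θ₁ ≠ 0) (θ₂ : ℝ) :
    {y : ℝ × ℝ × ℝ | ∃ x z s : ℝ, x ∈ Ix ∧ θ₁ * z ∈ I₁ ∧ s ∈ Ioo (0 : ℝ) 1 ∧
        y = (x, θ₁ * z, θ₂ * z + s)} = Ix ×ˢ (shear (θ₂ / θ₁) '' (I₁ ×ˢ Ioo 0 1)) := by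
  ext ⟨x, z₁, z₂⟩
  simp only [mem_ofPred_eq, mem_prod, mem_image, Prod.exists, Prod.mk.injEq, shear,
    MeasurableEquiv.coe_mk, Equiv.coe_fn_mk]
  constructor
  · rintro ⟨x, z, s, hx, hz, hs, rfl, rfl, rfl⟩
    exact ⟨hx, θ₁ * z, s, ⟨hz, hs⟩, rfl, by field_simp⟩
  · rintro ⟨hx, z, s, ⟨hz, hs⟩, rfl, rfl⟩
    exact ⟨x, z / θ₁, s, hx, by rwa [mul_div_cancel₀ _ hθ₁], hs, rfl,
      by rw [mul_div_cancel₀ _ hθ₁], by field_simp⟩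

open MeasureTheory in
theorem stmt_5_general
    (Ix I₁ : Set ℝ)
    (θ₁ θ₂ : ℝ) (hθ₁ : 0 < θ₁)
    (Ωper Ωθ : Set (ℝ × ℝ × ℝ))
    (hΩper : Ωper = Ix ×ˢ I₁ ×ˢ Set.Ioo (0 : ℝ) 1)
    (hΩθ : Ωθ = {y | ∃ x z s : ℝ, x ∈ Ix ∧ θ₁ * z ∈ I₁ ∧ s ∈ Set.Ioo (0 : ℝ) 1 ∧
        y = (x, θ₁ * z, θ₂ * z + s)})
    (V : ℝ × ℝ × ℝ → ℂ) (hV : IntegrableOn V Ωper)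
    (Vt : ℝ × ℝ × ℝ → ℂ)
    (hVt : ∀ y : ℝ × ℝ × ℝ, Vt y = V (y.1, y.2.1, y.2.2 - (⌊y.2.2⌋ : ℝ))) :
    IntegrableOn Vt Ωθ ∧ ∫ y in Ωper, V y = ∫ y in Ωθ, Vt y := by
  have reduce_mod_one : MeasurePreserving (Prod.map id (Prod.map id Int.fract))
      (volume.restrict Ωθ) (volume.restrict Ωper) := by
    rw [hΩθ, hΩper, obliqueDomain_eq_prod_shear_image Ix I₁ hθ₁.ne' θ₂, Measure.volume_eq_prod,
      ← Measure.prod_restrict, ← Measure.prod_restrict]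
    exact (MeasurePreserving.id _).prod (measurePreserving_prodMap_id_fract_shear_image _ _ _)
  have hVt_comp : Vt = V ∘ Prod.map id (Prod.map id Int.fract) := funext hVt
  refine ⟨hVt_comp ▸ (reduce_mod_one.integrable_comp hV.aestronglyMeasurable).2 hV, ?_⟩
  rw [hVt_comp, ← reduce_mod_one.map_eq]
  exact integral_map reduce_mod_one.measurable.aemeasurable (reduce_mod_one.map_eq ▸ hV.1)

open MeasureTheory in
/-- Lemma A.1 of the paper: the integral of `V` over the straight cylindrical domain
`Ω_per = I_x × I₁ × (0,1)` equals the integral of its `ℤe₂`-periodic extension `Ṽ` over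
the oblique domain `Ω_{per,θ} = T_θ(Q × (0,1))`, where
`T_θ(x, z, s) = (x, θ₁·z, θ₂·z + s)` and `Q = {(x,z) : x ∈ I_x, θ₁·z ∈ I₁}`. -/
theorem stmt_5
    (Ix I₁ : Set ℝ) (hIx : Ix.OrdConnected) (hI₁ : I₁.OrdConnected)
    (θ₁ θ₂ : ℝ) (hθ₁ : 0 < θ₁)
    (Ωper Ωθ : Set (ℝ × ℝ × ℝ))
    (hΩper : Ωper = Ix ×ˢ I₁ ×ˢ Set.Ioo (0 : ℝ) 1)
    (hΩθ : Ωθ = {y | ∃ x z s : ℝ, x ∈ Ix ∧ θ₁ * z ∈ I₁ ∧ s ∈ Set.Ioo (0 : ℝ) 1 ∧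
        y = (x, θ₁ * z, θ₂ * z + s)})
    (V : ℝ × ℝ × ℝ → ℂ) (hV : IntegrableOn V Ωper)
    (Vt : ℝ × ℝ × ℝ → ℂ)
    (hVt : ∀ y : ℝ × ℝ × ℝ, Vt y = V (y.1, y.2.1, y.2.2 - (⌊y.2.2⌋ : ℝ))) :
    IntegrableOn Vt Ωθ ∧ ∫ y in Ωper, V y = ∫ y in Ωθ, Vt y :=
  stmt_5_general Ix I₁ θ₁ θ₂ hθ₁ Ωper Ωθ hΩper hΩθ V hV Vt hVt
end

section
/- Let I_x, I₁ ⊆ ℝ be intervals, θ₁ > 0 and θ₂ ∈ ℝ. Set Ω_per := I_x × I₁ × (0,1) ⊆ ℝ³ and Q := {(x,z) ∈ ℝ² : x ∈ I_x and θ₁·z ∈ I₁}. Let V_C : Q × (0,1) → ℂ be any function, and define W : Ω_per → ℂ by W(x, z₁, z₂) := V_C(x, z₁/θ₁, t − ⌊t⌋) where t := z₂ − (θ₂/θ₁)·z₁. Then W is well defined (i.e. (x, z₁/θ₁) ∈ Q whenever (x,z₁,z₂) ∈ Ω_per) and the shear transform (S W)(x,z,s) := W(x, θ₁·z, θ₂·z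 + s − ⌊θ₂·z + s⌋) satisfies (S W)(x, z, s) = V_C(x, z, s) for every (x,z) ∈ Q and s ∈ (0,1). Consequently the shear transform S is surjective from functions on Ω_per onto functions on Q × (0,1). -/
theorem Int.fract_fract_add_sub {R : Type*} [Ring R] [LinearOrder R] [IsOrderedRing R]
    [FloorRing R] (a b : R) : Int.fract (Int.fract (a + b) - a) = Int.fract b := by
  rw [show Int.fract (a + b) - a = b - ⌊a + b⌋ by rw [Int.fract]; abel, Int.fract_sub_intCast]

theorem stmt_7_general
    (Ix I₁ : Set ℝ)
    (θ₁ θ₂ : ℝ) (hθ₁ : 0 < θ₁)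
    (Ωper : Set (ℝ × ℝ × ℝ)) (hΩper : Ωper = Ix ×ˢ I₁ ×ˢ Set.Ioo (0 : ℝ) 1)
    (Q : Set (ℝ × ℝ)) (hQ : Q = {p : ℝ × ℝ | p.1 ∈ Ix ∧ θ₁ * p.2 ∈ I₁})
    (VC : ℝ × ℝ → ℝ → ℂ)
    (W : ℝ × ℝ × ℝ → ℂ)
    (hW : ∀ x z₁ z₂ : ℝ,
      W (x, z₁, z₂) = VC (x, z₁ / θ₁) (Int.fract (z₂ - θ₂ / θ₁ * z₁))) :
    (∀ y ∈ Ωper, (y.1, y.2.1 / θ₁) ∈ Q) ∧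
    (∀ p ∈ Q, ∀ s ∈ Set.Ioo (0 : ℝ) 1,
      W (p.1, θ₁ * p.2, Int.fract (θ₂ * p.2 + s)) = VC p s) := by
  subst hΩper hQ
  have hθ₁' : θ₁ ≠ 0 := hθ₁.ne'
  constructor
  · rintro ⟨x, z₁, z₂⟩ ⟨hx, hz₁, -⟩
    exact ⟨hx, by rwa [mul_div_cancel₀ z₁ hθ₁']⟩
  · rintro ⟨x, z⟩ - s hs
    have hshear : θ₂ / θ₁ * (θ₁ * z) = θ₂ * z := by field_simp
    rw [hW, mul_div_cancel_left₀ z hθ₁', hshear, Int.fract_fract_add_sub,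
      Int.fract_eq_self.mpr ⟨hs.1.le, hs.2⟩]

/-- Invertibility (surjectivity) of the shear transform (Proposition 3.1 of the paper):
given any `V_C` on `Q × (0,1)`, the function
`W(x, z₁, z₂) := V_C(x, z₁/θ₁, fract(z₂ − (θ₂/θ₁)·z₁))` is well defined on
`Ω_per = I_x × I₁ × (0,1)` and satisfies `(S W)(x, z, s) = V_C(x, z, s)` for all
`(x,z) ∈ Q`, `s ∈ (0,1)`, where `(S W)(x,z,s) = W(x, θ₁·z, fract(θ₂·z + s))`. -/
theorem stmt_7
    (Ix I₁ : Set ℝ) (hIx : Ix.OrdConnected) (hI₁ : I₁.OrdConnected)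
    (θ₁ θ₂ : ℝ) (hθ₁ : 0 < θ₁)
    (Ωper : Set (ℝ × ℝ × ℝ)) (hΩper : Ωper = Ix ×ˢ I₁ ×ˢ Set.Ioo (0 : ℝ) 1)
    (Q : Set (ℝ × ℝ)) (hQ : Q = {p : ℝ × ℝ | p.1 ∈ Ix ∧ θ₁ * p.2 ∈ I₁})
    (VC : ℝ × ℝ → ℝ → ℂ)
    (W : ℝ × ℝ × ℝ → ℂ)
    (hW : ∀ x z₁ z₂ : ℝ,
      W (x, z₁, z₂) = VC (x, z₁ / θ₁) (Int.fract (z₂ - θ₂ / θ₁ * z₁))) :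
    (∀ y ∈ Ωper, (y.1, y.2.1 / θ₁) ∈ Q) ∧
    (∀ p ∈ Q, ∀ s ∈ Set.Ioo (0 : ℝ) 1,
      W (p.1, θ₁ * p.2, Int.fract (θ₂ * p.2 + s)) = VC p s) :=
  stmt_7_general Ix I₁ θ₁ θ₂ hθ₁ Ωper hΩper Q hQ VC W hW
end

section
/- Let f : ℝ → ℂ be continuous with compact support, and define its partial Floquet–Bloch transform (F f)(y, k) := (2π)^{-1/2} · Σ_{m ∈ ℤ} f(y + m)·exp(−i·k·(y + m)) for y ∈ ℝ and k ∈ ℝ (the sum is finite since f has compact support). Then for every y ∈ ℝ and every n ∈ ℤ one has the inversion formula (2π)^{-1/2} · ∫_{k ∈ (−π, π)} (F f)(y, k)·exp(i·k·(y + n)) dk = f(y + n). -/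
/-- Inversion formula for the partial Floquet–Bloch transform
`(F f)(y, k) := (2π)^{-1/2} · Σ_{m ∈ ℤ} f(y + m)·exp(−i·k·(y + m))` of a continuous
compactly supported function `f : ℝ → ℂ`:
`(2π)^{-1/2} · ∫_{(−π,π)} (F f)(y,k)·exp(i·k·(y+n)) dk = f(y + n)`. -/
theorem stmt_9
    (f : ℝ → ℂ) (hf : Continuous f) (hsupp : HasCompactSupport f)
    (F : ℝ → ℝ → ℂ)
    (hF : ∀ y k : ℝ, F y k =
      (Real.sqrt (2 * Real.pi) : ℂ)⁻¹ *
        ∑' m : ℤ, f (y + m) * Complex.exp (-Complex.I * k * (y + m))) :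
    ∀ (y : ℝ) (n : ℤ),
      (Real.sqrt (2 * Real.pi) : ℂ)⁻¹ *
        ∫ k in Set.Ioo (-Real.pi) Real.pi,
          F y k * Complex.exp (Complex.I * k * (y + n))
      = f (y + n) := by
  intro y n
  obtain ⟨r, hr⟩ := hsupp.isCompact.isBounded.subset_closedBall 0
  have hfin : {m : ℤ | f (y + m) ≠ 0}.Finite := by
    apply Set.Finite.subset (Set.finite_Icc ⌈-r - y⌉ ⌊r - y⌋)
    intro m hm
    have h1 : y + (m : ℝ) ∈ tsupport f := subset_tsupport f hm
    have h2 := hr h1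
    rw [Metric.mem_closedBall, Real.dist_eq, sub_zero] at h2
    have h3 := abs_le.mp h2
    exact ⟨Int.ceil_le.mpr (by linarith [h3.1]), Int.le_floor.mpr (by linarith [h3.2])⟩
  set s := hfin.toFinset with hs
  have hmem : ∀ m : ℤ, m ∈ s ↔ f (y + m) ≠ 0 := fun m => hfin.mem_toFinset
  set c0 : ℂ := (Real.sqrt (2 * Real.pi) : ℂ)⁻¹ with hc0
  have hFs : ∀ k : ℝ, F y k = c0 *
      ∑ m ∈ s, f (y + m) * Complex.exp (-Complex.I * k * (y + m)) := by
    intro k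
    rw [hF]
    congr 1
    refine tsum_eq_sum ?_
    intro m hm
    have : f (y + m) = 0 := by
      by_contra h; exact hm ((hmem m).mpr h)
    simp [this]
  have hIoo : (∫ k in Set.Ioo (-Real.pi) Real.pi,
        F y k * Complex.exp (Complex.I * k * (y + n)))
      = ∫ k in (-Real.pi)..Real.pi, F y k * Complex.exp (Complex.I * k * (y + n)) := by
    rw [intervalIntegral.integral_of_le (by linarith [Real.pi_pos]),
      MeasureTheory.integral_Ioc_eq_integral_Ioo]
  rw [hIoo]
  have hintg : ∀ m : ℤ,
      (∫ k in (-Real.pi)..Real.pi,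
        f (y + m) * Complex.exp (-Complex.I * k * (y + m)) * Complex.exp (Complex.I * k * (y + n)))
      = f (y + m) * (if m = n then (2 * Real.pi : ℂ) else 0) := by
    intro m
    have hrw : (fun k : ℝ => f (y + m) * Complex.exp (-Complex.I * k * (y + m)) *
          Complex.exp (Complex.I * k * (y + n)))
        = fun k : ℝ => f (y + m) * Complex.exp ((Complex.I * ((n : ℂ) - m)) * k) := by
      funext k
      rw [mul_assoc, ← Complex.exp_add]
      ring_nf
    rw [hrw, intervalIntegral.integral_const_mul]
    congr 1
    by_cases hmn : m = n
    · subst hmn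
      have h1 : (fun k : ℝ => Complex.exp (Complex.I * ((m : ℂ) - m) * k)) = fun _ => (1 : ℂ) := by
        funext k; simp
      rw [if_pos rfl, h1, intervalIntegral.integral_const, Complex.real_smul]
      push_cast
      ring
    · rw [if_neg hmn]
      have hc : Complex.I * ((n : ℂ) - m) ≠ 0 := by
        simp only [ne_eq, mul_eq_zero, Complex.I_ne_zero, false_or, sub_eq_zero]
        exact fun h => hmn (by exact_mod_cast h.symm)
      rw [integral_exp_mul_complex hc]
      have key : Complex.I * ((n : ℂ) - m) * (Real.pi : ℂ)
          = Complex.I * ((n : ℂ) - m) * ((-Real.pi : ℝ) : ℂ)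
            + ((n - m : ℤ) : ℂ) * (2 * Real.pi * Complex.I) := by
        push_cast; ring
      rw [key, Complex.exp_add, Complex.exp_int_mul_two_pi_mul_I, mul_one, sub_self, zero_div]
  have hint : ∀ m ∈ s, IntervalIntegrable (fun k : ℝ =>
      f (y + m) * Complex.exp (-Complex.I * k * (y + m)) * Complex.exp (Complex.I * k * (y + n)))
      MeasureTheory.volume (-Real.pi) Real.pi := by
    intro m _
    apply Continuous.intervalIntegrable
    fun_prop
  have hrw2 : (fun k : ℝ => F y k * Complex.exp (Complex.I * k * (y + n)))
      = fun k : ℝ => c0 * ∑ m ∈ s, (f (y + m) * Complex.exp (-Complex.I * k * (y + m)) *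
          Complex.exp (Complex.I * k * (y + n))) := by
    funext k
    rw [hFs k, mul_assoc, Finset.sum_mul]
  rw [hrw2, intervalIntegral.integral_const_mul, intervalIntegral.integral_finset_sum hint]
  rw [Finset.sum_congr rfl (fun m _ => hintg m)]
  have hsum : ∑ m ∈ s, f (y + m) * (if m = n then (2 * Real.pi : ℂ) else 0)
      = f (y + n) * (2 * Real.pi : ℂ) := by
    by_cases hn : n ∈ s
    · rw [Finset.sum_eq_single_of_mem n hn]
      · simp
      · intro b _ hb; simp [hb]
    · have h0 : f (y + n) = 0 := by
        by_contra h; exact hn ((hmem n).mpr h)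
      rw [h0, zero_mul]
      refine Finset.sum_eq_zero fun m hm => ?_
      have : m ≠ n := fun h => hn (h ▸ hm)
      simp [this]
  rw [hsum]
  have h2π : (0 : ℝ) < 2 * Real.pi := by positivity
  have hs2 : (c0 * c0) * (2 * Real.pi : ℂ) = 1 := by
    rw [hc0, ← mul_inv, ← Complex.ofReal_mul, Real.mul_self_sqrt h2π.le]
    have : ((2 * Real.pi : ℝ) : ℂ) ≠ 0 := by
      exact_mod_cast h2π.ne'
    push_cast at this ⊢
    exact inv_mul_cancel₀ this
  linear_combination f (y + (n : ℝ)) * hs2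
end

section
/- Let θ₁⁺, θ₂⁺, θ₁⁻, θ₂⁻ ∈ ℝ and let m₁, m₂, m₃, m₄ ∈ ℤ with m₁ ≠ 0 satisfy m₁·θ₁⁺ + m₂·θ₂⁺ + m₃·θ₁⁻ + m₄·θ₂⁻ = 0. Let f_p⁺, f_p⁻ : ℝ³ → ℝ be ℤ³-periodic (f_p^±(y + e) = f_p^±(y) for every y ∈ ℝ³ and every standard basis vector e of ℝ³). Define g⁺, g⁻ : ℝ⁴ → ℝ by g⁺(x, a, b, c) := f_p⁺(x, −m₂·a − m₃·b − m₄·c, m₁·a) and g⁻(x, a, b, c) := f_p⁻(x, m₁·b, m₁·c). Then: (i) g⁺ and g⁻ are ℤ⁴-periodic; and (ii) for every (x, z) ∈ ℝ² one has f_p⁺(x, θ₁⁺·z, θ₂⁺·z) = g⁺(x, θ₂⁺·z/m₁, θ₁⁻·z/m₁, θ₂⁻·z/m₁) and f_p⁻(x, θ₁⁻·z, θ₂⁻·z) = g⁻(x, θ₂⁺·z/m₁, θ₁⁻·z/m₁, θ₂⁻·z/m₁). -/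
/-!
Pulling a `ℤ³`-periodic function back along a linear map with integer coefficients gives a
`ℤ⁴`-periodic function, since unit shifts are sent to integer shifts. The relation
`m₁θ₁⁺ + m₂θ₂⁺ + m₃θ₁⁻ + m₄θ₂⁻ = 0` is exactly what makes `(-m₂a - m₃b - m₄c, m₁a)` recover
`(θ₁⁺z, θ₂⁺z)` on the cut `(a, b, c) = (θ₂⁺, θ₁⁻, θ₂⁻) z / m₁`.
-/

open Function

section Periodicity

variable {α : Type*}

def IsUnitPeriodic₃ (f : ℝ × ℝ × ℝ → α) : Prop :=
  ∀ x y z : ℝ,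
    f (x + 1, y, z) = f (x, y, z) ∧ f (x, y + 1, z) = f (x, y, z) ∧ f (x, y, z + 1) = f (x, y, z)

def IsUnitPeriodic₄ (g : ℝ × ℝ × ℝ × ℝ → α) : Prop :=
  ∀ x a b c : ℝ,
    g (x + 1, a, b, c) = g (x, a, b, c) ∧ g (x, a + 1, b, c) = g (x, a, b, c) ∧
    g (x, a, b + 1, c) = g (x, a, b, c) ∧ g (x, a, b, c + 1) = g (x, a, b, c)

theorem IsUnitPeriodic₃.apply_add_int {f : ℝ × ℝ × ℝ → α} (hf : IsUnitPeriodic₃ f)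
    (k m n : ℤ) (x y z : ℝ) : f (x + k, y + m, z + n) = f (x, y, z) := by
  have h₁ : Periodic (fun t => f (t, y, z)) 1 := fun t => (hf t y z).1
  have h₂ : Periodic (fun t => f (x + k, t, z)) 1 := fun t => (hf (x + k) t z).2.1
  have h₃ : Periodic (fun t => f (x + k, y + m, t)) 1 := fun t => (hf (x + k) (y + m) t).2.2
  calc f (x + k, y + m, z + n) = f (x + k, y + m, z) := by simpa using h₃.int_mul n z
    _ = f (x + k, y, z) := by simpa using h₂.int_mul m y
    _ = f (x, y, z) := by simpa using h₁.int_mul k x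

theorem IsUnitPeriodic₃.isUnitPeriodic₄_of_intLinear {f : ℝ × ℝ × ℝ → α}
    (hf : IsUnitPeriodic₃ f) (p₁ p₂ p₃ q₁ q₂ q₃ : ℤ) {g : ℝ × ℝ × ℝ × ℝ → α}
    (hg : ∀ x a b c : ℝ,
      g (x, a, b, c) = f (x, p₁ * a + p₂ * b + p₃ * c, q₁ * a + q₂ * b + q₃ * c)) :
    IsUnitPeriodic₄ g := by
  intro x a b c
  simp only [hg]
  refine ⟨?_, ?_, ?_, ?_⟩
  · simpa using hf.apply_add_int 1 0 0 x _ _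
  · convert hf.apply_add_int 0 p₁ q₁ x _ _ using 4 <;> push_cast <;> ring
  · convert hf.apply_add_int 0 p₂ q₂ x _ _ using 4 <;> push_cast <;> ring
  · convert hf.apply_add_int 0 p₃ q₃ x _ _ using 4 <;> push_cast <;> ring

end Periodicity

theorem neg_linear_combination_div_eq_of_relation {K : Type*} [Field K]
    {θ₁ θ₂ θ₃ θ₄ m₁ m₂ m₃ m₄ : K} (hm₁ : m₁ ≠ 0)
    (hrel : m₁ * θ₁ + m₂ * θ₂ + m₃ * θ₃ + m₄ * θ₄ = 0) (z : K) :
    -m₂ * (θ₂ * z / m₁) - m₃ * (θ₃ * z / m₁) - m₄ * (θ₄ * z / m₁) = θ₁ * z := by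
  field_simp
  linear_combination (-z) * hrel

/-- Rationally dependent case of Section 7.2.3 of the paper: when the cut parameters
satisfy a nontrivial integer relation `m₁θ₁⁺ + m₂θ₂⁺ + m₃θ₁⁻ + m₄θ₂⁻ = 0` with
`m₁ ≠ 0`, the `ℤ³`-periodic functions `f_p±` can be represented through `ℤ⁴`-periodic
functions `g±` along the cut directions `(θ₂⁺/m₁, θ₁⁻/m₁, θ₂⁻/m₁)`. -/
theorem stmt_15
    (θ₁p θ₂p θ₁m θ₂m : ℝ)
    (m₁ m₂ m₃ m₄ : ℤ) (hm₁ : m₁ ≠ 0)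
    (hrel : (m₁ : ℝ) * θ₁p + (m₂ : ℝ) * θ₂p + (m₃ : ℝ) * θ₁m + (m₄ : ℝ) * θ₂m = 0)
    (fpP fpM : ℝ × ℝ × ℝ → ℝ)
    (hfpP : ∀ x z₁ z₂ : ℝ,
      fpP (x + 1, z₁, z₂) = fpP (x, z₁, z₂) ∧
      fpP (x, z₁ + 1, z₂) = fpP (x, z₁, z₂) ∧
      fpP (x, z₁, z₂ + 1) = fpP (x, z₁, z₂))
    (hfpM : ∀ x z₁ z₂ : ℝ,
      fpM (x + 1, z₁, z₂) = fpM (x, z₁, z₂) ∧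
      fpM (x, z₁ + 1, z₂) = fpM (x, z₁, z₂) ∧
      fpM (x, z₁, z₂ + 1) = fpM (x, z₁, z₂))
    (gP gM : ℝ × ℝ × ℝ × ℝ → ℝ)
    (hgP : ∀ x a b c : ℝ,
      gP (x, a, b, c) =
        fpP (x, -(m₂ : ℝ) * a - (m₃ : ℝ) * b - (m₄ : ℝ) * c, (m₁ : ℝ) * a))
    (hgM : ∀ x a b c : ℝ,
      gM (x, a, b, c) = fpM (x, (m₁ : ℝ) * b, (m₁ : ℝ) * c)) :
    (∀ x a b c : ℝ,
      (gP (x + 1, a, b, c) = gP (x, a, b, c) ∧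
       gP (x, a + 1, b, c) = gP (x, a, b, c) ∧
       gP (x, a, b + 1, c) = gP (x, a, b, c) ∧
       gP (x, a, b, c + 1) = gP (x, a, b, c)) ∧
      (gM (x + 1, a, b, c) = gM (x, a, b, c) ∧
       gM (x, a + 1, b, c) = gM (x, a, b, c) ∧
       gM (x, a, b + 1, c) = gM (x, a, b, c) ∧
       gM (x, a, b, c + 1) = gM (x, a, b, c))) ∧
    (∀ x z : ℝ,
      fpP (x, θ₁p * z, θ₂p * z)
        = gP (x, θ₂p * z / (m₁ : ℝ), θ₁m * z / (m₁ : ℝ), θ₂m * z / (m₁ : ℝ)) ∧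
      fpM (x, θ₁m * z, θ₂m * z)
        = gM (x, θ₂p * z / (m₁ : ℝ), θ₁m * z / (m₁ : ℝ), θ₂m * z / (m₁ : ℝ))) := by
  have hm : (m₁ : ℝ) ≠ 0 := Int.cast_ne_zero.mpr hm₁
  have hgP₄ : IsUnitPeriodic₄ gP :=
    IsUnitPeriodic₃.isUnitPeriodic₄_of_intLinear hfpP (-m₂) (-m₃) (-m₄) m₁ 0 0 fun x a b c => by
      rw [hgP]; congr 3 <;> push_cast <;> ring
  have hgM₄ : IsUnitPeriodic₄ gM :=
    IsUnitPeriodic₃.isUnitPeriodic₄_of_intLinear hfpM 0 m₁ 0 0 0 m₁ fun x a b c => by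
      rw [hgM]; congr 3 <;> push_cast <;> ring
  refine ⟨fun x a b c => ⟨hgP₄ x a b c, hgM₄ x a b c⟩, fun x z => ⟨?_, ?_⟩⟩
  · rw [hgP, neg_linear_combination_div_eq_of_relation hm hrel, mul_div_cancel₀ _ hm]
  · rw [hgM, mul_div_cancel₀ _ hm, mul_div_cancel₀ _ hm]
end
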